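/- Let C be a category in which every morphism is monic and all hom-sets are finite, and let D be a (not necessarily full) subcategory of C. If C has the Ramsey property and D is closed for binary diagrams (every binary diagram in D that has a commuting cocone in C has a commuting cocone in D), then D has the Ramsey property. -/
import Mathlib


open CategoryTheory

universe v u

variable (C : Type u) [Category.{v} C]

/-- A category has the Ramsey property if for every `k ≥ 2` and objects `A`, `B` there is
an object `Z` such that every `k`-coloring of `hom(A, Z)` admits `w ∈ hom(B, Z)` with
`w · hom(A, B)` monochromatic. -/
def RamseyProperty : Prop :=
  ∀ (k : ℕ), 2 ≤ k → ∀ (A B : C), ∃ Z : C,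
    ∀ χ : (A ⟶ Z) → Fin k, ∃ (w : B ⟶ Z) (i : Fin k),
      ∀ u : A ⟶ B, χ (u ≫ w) = i

variable {C}

/-- A subcategory of `C`, given by a predicate `DO` on objects and a predicate `DH` on
morphisms, is *closed for binary diagrams* if every binary diagram in the subcategory
(bottom vertices sent to `A`, top vertices sent to `B`, each bottom vertex carrying two
arrows into top vertices) which has a commuting cocone in `C` has a commuting cocone in
the subcategory. -/
def ClosedForBinaryDiagrams (DO : C → Prop) (DH : ∀ ⦃X Y : C⦄, (X ⟶ Y) → Prop) : Prop :=
  ∀ (A B : C), DO A → DO B → ∀ (n m : ℕ)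
    (t : Fin m → Fin n × Fin n × (A ⟶ B) × (A ⟶ B)),
    (∀ p, DH (t p).2.2.1 ∧ DH (t p).2.2.2) →
    (∃ (Z : C) (e : Fin n → (B ⟶ Z)),
      ∀ p, (t p).2.2.1 ≫ e (t p).1 = (t p).2.2.2 ≫ e (t p).2.1) →
    ∃ (Z : C) (e : Fin n → (B ⟶ Z)), DO Z ∧ (∀ i, DH (e i)) ∧
      ∀ p, (t p).2.2.1 ≫ e (t p).1 = (t p).2.2.2 ≫ e (t p).2.1

/-- If every morphism of `C` is monic, all hom-sets of `C` are finite, `C` has the Ramsey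
property, and the (not necessarily full) subcategory determined by `DO` and `DH` is closed
for binary diagrams, then the subcategory has the Ramsey property. -/
theorem ramseyProperty_subcategory
    (hmono : ∀ (X Y : C) (f : X ⟶ Y), Mono f)
    (hfin : ∀ X Y : C, Finite (X ⟶ Y))
    (DO : C → Prop) (DH : ∀ ⦃X Y : C⦄, (X ⟶ Y) → Prop)
    (hid : ∀ X : C, DO X → DH (𝟙 X))
    (hcomp : ∀ (X Y Z : C) (f : X ⟶ Y) (g : Y ⟶ Z), DH f → DH g → DH (f ≫ g))
    (hC : RamseyProperty C)
    (hclosed : ClosedForBinaryDiagrams DO DH) :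
    ∀ (k : ℕ), 2 ≤ k → ∀ (A B : C), DO A → DO B → ∃ Z : C, DO Z ∧
      ∀ χ : {f : A ⟶ Z // DH f} → Fin k,
        ∃ (w : B ⟶ Z), DH w ∧ ∃ i : Fin k,
          ∀ (u : A ⟶ B) (hu : DH u) (h : DH (u ≫ w)), χ ⟨u ≫ w, h⟩ = i := by
  intro k hk A B hA hB
  obtain ⟨Z₀, hZ₀⟩ := hC k hk A B
  have hk0 : 0 < k := by omega
  have hne : Nonempty (B ⟶ Z₀) := by
    obtain ⟨w, _, _⟩ := hZ₀ (fun _ => ⟨0, hk0⟩)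
    exact ⟨w⟩
  have : Finite (B ⟶ Z₀) := hfin B Z₀
  have : Fintype (B ⟶ Z₀) := Fintype.ofFinite _
  set n := Fintype.card (B ⟶ Z₀) with hn
  let W : Fin n → (B ⟶ Z₀) := (Fintype.equivFin (B ⟶ Z₀)).symm
  have hWsurj : Function.Surjective W := (Fintype.equivFin (B ⟶ Z₀)).symm.surjective
  have : Finite (A ⟶ B) := hfin A B
  let S := {p : Fin n × Fin n × (A ⟶ B) × (A ⟶ B) //
    DH p.2.2.1 ∧ DH p.2.2.2 ∧ p.2.2.1 ≫ W p.1 = p.2.2.2 ≫ W p.2.1}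
  have : Finite S := Subtype.finite
  have : Fintype S := Fintype.ofFinite _
  set m := Fintype.card S with hm
  let T : Fin m → S := (Fintype.equivFin S).symm
  have hTsurj : Function.Surjective T := (Fintype.equivFin S).symm.surjective
  let t : Fin m → Fin n × Fin n × (A ⟶ B) × (A ⟶ B) := fun p => (T p).1
  have ht : ∀ p, DH (t p).2.2.1 ∧ DH (t p).2.2.2 := fun p => ⟨(T p).2.1, (T p).2.2.1⟩
  have hcocone : ∃ (Z : C) (e : Fin n → (B ⟶ Z)),
      ∀ p, (t p).2.2.1 ≫ e (t p).1 = (t p).2.2.2 ≫ e (t p).2.1 :=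
    ⟨Z₀, W, fun p => (T p).2.2.2⟩
  obtain ⟨Z, e, hZ, hDHe, hrel⟩ := hclosed A B hA hB n m t ht hcocone
  have key : ∀ (i j : Fin n) (u v : A ⟶ B), DH u → DH v →
      u ≫ W i = v ≫ W j → u ≫ e i = v ≫ e j := by
    intro i j u v hu hv heq
    obtain ⟨p, hp⟩ := hTsurj ⟨(i, j, u, v), hu, hv, heq⟩
    have h := hrel p
    simp only [t, hp] at h
    exact h
  refine ⟨Z, hZ, ?_⟩
  intro χ
  classical
  let χ' : (A ⟶ Z₀) → Fin k := fun f =>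
    if h : ∃ q : Fin n × (A ⟶ B), DH q.2 ∧ q.2 ≫ W q.1 = f then
      χ ⟨h.choose.2 ≫ e h.choose.1,
        hcomp _ _ _ _ _ h.choose_spec.1 (hDHe _)⟩
    else ⟨0, hk0⟩
  obtain ⟨w, c, hmonochr⟩ := hZ₀ χ'
  obtain ⟨i₀, hi₀⟩ := hWsurj w
  refine ⟨e i₀, hDHe i₀, c, ?_⟩
  intro u hu h
  have h1 := hmonochr u
  have hex : ∃ q : Fin n × (A ⟶ B), DH q.2 ∧ q.2 ≫ W q.1 = u ≫ w :=
    ⟨(i₀, u), hu, by rw [hi₀]⟩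
  simp only [χ', dif_pos hex] at h1
  have hq := hex.choose_spec
  have heq : hex.choose.2 ≫ e hex.choose.1 = u ≫ e i₀ :=
    key _ _ _ _ hq.1 hu (hq.2.trans (by rw [hi₀]))
  rw [← h1]
  exact congrArg χ (Subtype.ext heq.symm)
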